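/- arXiv:2212.00348 — 3 statements merged into one kernel-verified Lean document; each statement's English description precedes it below -/
import Mathlib

section
/- Let G be a countable group acting transitively on a nonempty (hence countable) set Y. Suppose there exist an increasing sequence of finite subsets K_n ⊆ Y with ∪_n K_n = Y, a sequence of positive reals ε_n converging to 0, and for each n a finitely supported probability measure ν_n on G satisfying ν_n(g) = ν_n(g⁻¹) for all g ∈ G, such that for all x, y ∈ K_n one has ∑_{z ∈ Y} |P_{ν_n}(x,z) − P_{ν_n}(y,z)| < ε_n. Then there exists a probability measure ν on G with ν(g) = ν(g⁻¹) for all g ∈ G, whose support generates G as a semigroup, such that every bounded ν-harmonic function f : Y → ℝ is constant. -/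
open Filter

/-- The transition kernel of the random walk on `Y` induced by a measure `ν : G → ℝ`:
`P_ν(x,z) = ∑_{g : g • x = z} ν g`. -/
noncomputable def transProb {G Y : Type*} [Group G] [MulAction G Y]
    (ν : G → ℝ) (x z : Y) : ℝ :=
  ∑' g : {g : G // g • x = z}, ν g.1

section FMeas

variable {ι β : Type*} [DecidableEq β]

/-- The finitely supported measure induced by a weighted finite family. -/
noncomputable def fmeas (Q : Finset ι) (W : ι → ℝ) (π : ι → β) (z : β) : ℝ :=
  ∑ q ∈ Q.filter (fun q => π q = z), W q

lemma fmeas_eq_zero {Q : Finset ι} {W : ι → ℝ} {π : ι → β} {z : β}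
    (hz : z ∉ Q.image π) : fmeas Q W π z = 0 := by
  have : Q.filter (fun q => π q = z) = ∅ := by
    rw [Finset.filter_eq_empty_iff]
    intro q hq hqz
    exact hz (Finset.mem_image.2 ⟨q, hq, hqz⟩)
  simp [fmeas, this]

lemma fmeas_nonneg {Q : Finset ι} {W : ι → ℝ} {π : ι → β} {z : β}
    (hW : ∀ q ∈ Q, 0 ≤ W q) : 0 ≤ fmeas Q W π z :=
  Finset.sum_nonneg fun q hq => hW q (Finset.mem_filter.1 hq).1

lemma fmeas_tsum_mul (Q : Finset ι) (W : ι → ℝ) (π : ι → β) (F : β → ℝ) :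
    ∑' z : β, fmeas Q W π z * F z = ∑ q ∈ Q, W q * F (π q) := by
  have h0 : ∀ z ∉ Q.image π, fmeas Q W π z * F z = 0 := by
    intro z hz; rw [fmeas_eq_zero hz, zero_mul]
  rw [tsum_eq_sum h0]
  have h1 : ∀ z ∈ Q.image π,
      fmeas Q W π z * F z = ∑ q ∈ Q.filter (fun q => π q = z), W q * F (π q) := by
    intro z _
    rw [fmeas, Finset.sum_mul]
    refine Finset.sum_congr rfl fun q hq => ?_
    rw [(Finset.mem_filter.1 hq).2]
  rw [Finset.sum_congr rfl h1]
  exact Finset.sum_fiberwise_of_maps_to (fun q hq => Finset.mem_image_of_mem π hq) _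

lemma fmeas_sum (Q : Finset ι) (W : ι → ℝ) (π : ι → β) :
    ∑' z : β, fmeas Q W π z = ∑ q ∈ Q, W q := by
  have := fmeas_tsum_mul Q W π (fun _ => (1:ℝ))
  simpa using this

lemma fmeas_summable_mul (Q : Finset ι) (W : ι → ℝ) (π : ι → β) (F : β → ℝ) :
    Summable (fun z => fmeas Q W π z * F z) :=
  summable_of_ne_finset_zero (s := Q.image π)
    (fun z hz => by rw [fmeas_eq_zero hz, zero_mul])

lemma fmeas_summable (Q : Finset ι) (W : ι → ℝ) (π : ι → β) :
    Summable (fmeas Q W π) :=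
  summable_of_ne_finset_zero (s := Q.image π) (fun z hz => fmeas_eq_zero hz)

lemma fmeas_le_sum {Q : Finset ι} {W : ι → ℝ} {π : ι → β} {z : β}
    (hW : ∀ q ∈ Q, 0 ≤ W q) : fmeas Q W π z ≤ ∑ q ∈ Q, W q :=
  Finset.sum_le_sum_of_subset_of_nonneg (Finset.filter_subset _ _)
    (fun q hq _ => hW q hq)

lemma fmeas_single_le {Q : Finset ι} {W : ι → ℝ} {π : ι → β} {z : β} {q0 : ι}
    (hW : ∀ q ∈ Q, 0 ≤ W q) (hq0 : q0 ∈ Q) (hπ : π q0 = z) :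
    W q0 ≤ fmeas Q W π z := by
  refine Finset.single_le_sum (f := W) (fun q hq => hW q (Finset.mem_filter.1 hq).1) ?_
  exact Finset.mem_filter.2 ⟨hq0, hπ⟩

end FMeas

section TransP

variable {G Y : Type*} [Group G] [MulAction G Y] [DecidableEq Y]

lemma transProb_eq_fmeas (ν : G → ℝ) (hfin : (Function.support ν).Finite)
    (x z : Y) : transProb ν x z = fmeas hfin.toFinset ν (fun g => g • x) z := by
  rw [transProb]
  have e0 : ∑' g : {g : G // g • x = z}, ν g.1
      = ∑' g : G, Set.indicator {g : G | g • x = z} ν g :=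
    tsum_subtype ({g : G | g • x = z}) ν
  rw [e0, tsum_eq_sum (s := hfin.toFinset.filter (fun g => g • x = z))]
  · refine Finset.sum_congr rfl fun g hg => ?_
    have hgz : g • x = z := (Finset.mem_filter.1 hg).2
    exact Set.indicator_of_mem (show g ∈ {g : G | g • x = z} from hgz) ν
  · intro g hg
    by_cases hx : g • x = z
    · have : ν g = 0 := by
        by_contra hν
        exact hg (Finset.mem_filter.2 ⟨hfin.mem_toFinset.2 hν, hx⟩)
      rw [Set.indicator_apply]
      split <;> simp [this]
    · exact Set.indicator_of_notMem (show g ∉ {g : G | g • x = z} from hx) ν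

/-- Key "good-step" estimate: a double ν-step merges two trajectories up to total
variation. -/
lemma good_step (ν : G → ℝ) (hnn : ∀ g, 0 ≤ ν g)
    (hfin : (Function.support ν).Finite) (hmass : ∑ b ∈ hfin.toFinset, ν b = 1)
    (f : Y → ℝ) (C : ℝ) (hf : ∀ y, |f y| ≤ C) (x' y' : Y) :
    |(∑ c ∈ hfin.toFinset, ν c * ∑ b ∈ hfin.toFinset, ν b * f (b • (c • x'))) -
      (∑ c ∈ hfin.toFinset, ν c * ∑ b ∈ hfin.toFinset, ν b * f (b • (c • y')))| ≤
      (∑' z : Y, |transProb ν x' z - transProb ν y' z|) * C := by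
  classical
  set S := hfin.toFinset with hS
  set h : Y → ℝ := fun w => ∑ b ∈ S, ν b * f (b • w) with hh
  have hhC : ∀ w, |h w| ≤ C := by
    intro w
    calc |h w| ≤ ∑ b ∈ S, |ν b * f (b • w)| := Finset.abs_sum_le_sum_abs _ _
    _ ≤ ∑ b ∈ S, ν b * C := by
        refine Finset.sum_le_sum fun b _ => ?_
        rw [abs_mul, abs_of_nonneg (hnn b)]
        exact mul_le_mul_of_nonneg_left (hf _) (hnn b)
    _ = C := by rw [← Finset.sum_mul, hmass, one_mul]
  set P1 : Y → ℝ := fmeas S ν (fun g => g • x') with hP1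
  set P2 : Y → ℝ := fmeas S ν (fun g => g • y') with hP2
  have e1 : (∑ c ∈ S, ν c * h (c • x')) = ∑' z : Y, P1 z * h z :=
    (fmeas_tsum_mul S ν (fun g => g • x') h).symm
  have e2 : (∑ c ∈ S, ν c * h (c • y')) = ∑' z : Y, P2 z * h z :=
    (fmeas_tsum_mul S ν (fun g => g • y') h).symm
  have hs1 : Summable (fun z => P1 z * h z) := fmeas_summable_mul _ _ _ _
  have hs2 : Summable (fun z => P2 z * h z) := fmeas_summable_mul _ _ _ _
  have hsd : Summable (fun z => (P1 z - P2 z) * h z) := by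
    have := hs1.sub hs2
    refine this.congr fun z => ?_
    ring
  have hsupp : ∀ z ∉ (S.image (fun g => g • x')) ∪ (S.image (fun g => g • y')),
      P1 z - P2 z = 0 := by
    intro z hz
    rw [Finset.mem_union] at hz
    push_neg at hz
    rw [hP1, hP2, fmeas_eq_zero hz.1, fmeas_eq_zero hz.2, sub_zero]
  have hsabs : Summable (fun z => |P1 z - P2 z|) :=
    summable_of_ne_finset_zero (s := (S.image (fun g => g • x')) ∪ (S.image (fun g => g • y')))
      (fun z hz => by rw [hsupp z hz, abs_zero])
  calc |(∑ c ∈ S, ν c * ∑ b ∈ S, ν b * f (b • (c • x'))) -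
      (∑ c ∈ S, ν c * ∑ b ∈ S, ν b * f (b • (c • y')))|
      = |∑' z : Y, (P1 z - P2 z) * h z| := by
        rw [show (∑ c ∈ S, ν c * ∑ b ∈ S, ν b * f (b • (c • x'))) = ∑ c ∈ S, ν c * h (c • x')
            from rfl]
        rw [show (∑ c ∈ S, ν c * ∑ b ∈ S, ν b * f (b • (c • y'))) = ∑ c ∈ S, ν c * h (c • y')
            from rfl]
        rw [e1, e2, ← Summable.tsum_sub hs1 hs2]
        congr 1
        refine tsum_congr fun z => ?_
        ring
    _ ≤ ∑' z : Y, ‖(P1 z - P2 z) * h z‖ := norm_tsum_le_tsum_norm (by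
        refine hsd.abs.congr fun z => ?_
        rw [Real.norm_eq_abs])
    _ ≤ ∑' z : Y, |P1 z - P2 z| * C := by
        refine Summable.tsum_le_tsum (fun z => ?_) (by
          refine hsd.abs.congr fun z => (Real.norm_eq_abs _).symm) (hsabs.mul_right C)
        rw [Real.norm_eq_abs, abs_mul]
        exact mul_le_mul_of_nonneg_left (hhC z) (abs_nonneg _)
    _ = (∑' z : Y, |P1 z - P2 z|) * C := tsum_mul_right
    _ = (∑' z : Y, |transProb ν x' z - transProb ν y' z|) * C := by
        congr 1
        refine tsum_congr fun z => ?_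
        rw [transProb_eq_fmeas ν hfin x' z, transProb_eq_fmeas ν hfin y' z, hP1, hP2]

end TransP
section Quad

variable {G Y : Type*} [Group G] [MulAction G Y]

lemma quad_sum (F S : Finset G) (la nu : G → ℝ) (T : Y → ℝ) (x : Y) :
    ∑ q ∈ F ×ˢ S ×ˢ S ×ˢ F,
      (la q.1 * (nu q.2.1 * (nu q.2.2.1 * la q.2.2.2))) *
        T ((q.1 * (q.2.1 * (q.2.2.1 * q.2.2.2))) • x)
    = ∑ a ∈ F, la a * ∑ d ∈ F, la d * ∑ c ∈ S, nu c * ∑ b ∈ S, nu b *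
        T (a • (b • (c • (d • x)))) := by
  rw [Finset.sum_product]
  refine Finset.sum_congr rfl fun a _ => ?_
  have expand : ∀ b ∈ S, (∑ p ∈ S ×ˢ F,
      (la a * (nu b * (nu p.1 * la p.2))) * T ((a * (b * (p.1 * p.2))) • x))
      = ∑ c ∈ S, ∑ d ∈ F,
        (la a * (nu b * (nu c * la d))) * T ((a * (b * (c * d))) • x) := by
    intro b _
    rw [Finset.sum_product]
  rw [Finset.sum_product, Finset.sum_congr rfl expand]
  have comm1 : ∑ b ∈ S, ∑ c ∈ S, ∑ d ∈ F,
      (la a * (nu b * (nu c * la d))) * T ((a * (b * (c * d))) • x)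
      = ∑ d ∈ F, ∑ c ∈ S, ∑ b ∈ S,
      (la a * (nu b * (nu c * la d))) * T ((a * (b * (c * d))) • x) := by
    rw [Finset.sum_comm]
    rw [Finset.sum_congr rfl (fun c _ => Finset.sum_comm (s := S) (t := F)
      (f := fun b d => (la a * (nu b * (nu c * la d))) * T ((a * (b * (c * d))) • x)))]
    rw [Finset.sum_comm]
  rw [comm1]
  simp only [Finset.mul_sum]
  refine Finset.sum_congr rfl fun d _ => ?_
  refine Finset.sum_congr rfl fun c _ => ?_
  refine Finset.sum_congr rfl fun b _ => ?_
  rw [mul_smul, mul_smul, mul_smul]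
  ring

end Quad
lemma arith_combine (m k C p : ℝ) (hm1 : 0 < m + 1) (hmk : 0 < m + 1 + k)
    (hCp : 0 ≤ C * p) :
    (1 - (m+1)⁻¹) * (2*C*((m+1)/((m+1)+k)) + 2*C*(p*(1/2)))
      + (m+1)⁻¹ * (p * C) ≤ 2*C*(m/(m+(k+1))) + 2*C*p := by
  have hmk' : m + (k+1) = (m+1)+k := by ring
  have e1 : (1 - (m+1)⁻¹) * (2*C*((m+1)/((m+1)+k))) = 2*C*(m/(m+(k+1))) := by
    rw [hmk']
    field_simp
    ring
  have e2 : (1 - (m+1)⁻¹) * (2*C*(p*(1/2))) + (m+1)⁻¹ * (p * C) = C * p := by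
    field_simp
    ring
  have expand : (1 - (m+1)⁻¹) * (2*C*((m+1)/((m+1)+k)) + 2*C*(p*(1/2)))
      + (m+1)⁻¹ * (p * C)
      = (1 - (m+1)⁻¹) * (2*C*((m+1)/((m+1)+k)))
        + ((1 - (m+1)⁻¹) * (2*C*(p*(1/2))) + (m+1)⁻¹ * (p * C)) := by ring
  rw [expand, e1, e2]
  linarith
section Construct

open Filter

variable {G Y : Type*} [Group G] [MulAction G Y]

lemma construct (K : ℕ → Finset Y) (hKmono : Monotone K) (hKexh : ∀ y : Y, ∃ n, y ∈ K n)
    (ε : ℕ → ℝ) (hεlim : Tendsto ε atTop (nhds 0))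
    (ν : ℕ → G → ℝ) (hνfin : ∀ n, (Function.support (ν n)).Finite)
    (γ : ℕ → G) :
    ∃ Λ nn : ℕ → ℕ,
      (∀ j, j ≤ Λ j) ∧ (∀ i j, i ≤ j → Λ i ≤ Λ j) ∧
      (∀ j, ε (nn j) ≤ (1/2 : ℝ)^j) ∧
      (∀ j a x, (a = 1 ∨ a = γ j ∨ a = (γ j)⁻¹) → x ∈ K (Λ j) → a • x ∈ K (nn j)) ∧
      (∀ m j, j ≤ m → ∀ a b c d x, (a = 1 ∨ a = γ j ∨ a = (γ j)⁻¹) →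
        b ∈ (hνfin (nn j)).toFinset → c ∈ (hνfin (nn j)).toFinset →
        (d = 1 ∨ d = γ j ∨ d = (γ j)⁻¹) → x ∈ K (Λ m) →
        (a * (b * (c * d))) • x ∈ K (Λ (m+1))) := by
  classical
  have hKsub : ∀ {m m' : ℕ}, m ≤ m' → ∀ {y : Y}, y ∈ K m → y ∈ K m' :=
    fun h _ hy => hKmono h hy
  have hfin : ∀ B : Finset Y, ∃ m, ∀ y ∈ B, y ∈ K m := by
    intro B
    induction B using Finset.induction with
    | empty => exact ⟨0, by simp⟩
    | @insert a s _ ih =>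
      obtain ⟨m, hm⟩ := ih
      obtain ⟨m', hm'⟩ := hKexh a
      refine ⟨max m m', ?_⟩
      intro y hy
      rcases Finset.mem_insert.1 hy with h | h
      · subst h; exact hKsub (le_max_right m m') hm'
      · exact hKsub (le_max_left m m') (hm y h)
  have pick1 : ∀ j L : ℕ, ∃ nn : ℕ,
      (∀ a x, (a = 1 ∨ a = γ j ∨ a = (γ j)⁻¹) → x ∈ K L → a • x ∈ K nn) ∧
      ε nn ≤ (1/2 : ℝ)^j := by
    intro j L
    obtain ⟨m, hm⟩ := hfin ((({1, γ j, (γ j)⁻¹} : Finset G) ×ˢ K L).image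
      (fun p => p.1 • p.2))
    have hev : ∀ᶠ n in atTop, ε n < (1/2 : ℝ)^j :=
      hεlim.eventually_lt_const (by positivity)
    obtain ⟨N, hN⟩ := eventually_atTop.1 hev
    refine ⟨max m N, ?_, le_of_lt (hN _ (le_max_right m N))⟩
    intro a x ha hx
    refine hKsub (le_max_left m N) (hm _ ?_)
    refine Finset.mem_image.2 ⟨(a, x), ?_, rfl⟩
    refine Finset.mem_product.2 ⟨?_, hx⟩
    simp only [Finset.mem_insert, Finset.mem_singleton]
    exact ha
  have pick2 : ∀ (L : ℕ) (B : Finset G), ∃ L' : ℕ, L + 1 ≤ L' ∧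
      ∀ g ∈ B, ∀ x ∈ K L, g • x ∈ K L' := by
    intro L B
    obtain ⟨m, hm⟩ := hfin ((B ×ˢ K L).image (fun p => p.1 • p.2))
    refine ⟨max (L+1) m, le_max_left _ _, ?_⟩
    intro g hg x hx
    refine hKsub (le_max_right (L+1) m) (hm _ ?_)
    exact Finset.mem_image.2 ⟨(g, x), Finset.mem_product.2 ⟨hg, hx⟩, rfl⟩
  choose f1 hf1a hf1b using pick1
  choose f2 hf2a hf2b using pick2
  let Tof : ℕ → ℕ → Finset G := fun j L =>
    ((({1, γ j, (γ j)⁻¹} : Finset G) ×ˢ (hνfin (f1 j L)).toFinset ×ˢ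
      (hνfin (f1 j L)).toFinset ×ˢ ({1, γ j, (γ j)⁻¹} : Finset G)).image
      (fun q => q.1 * (q.2.1 * (q.2.2.1 * q.2.2.2))))
  let st : ℕ → ℕ × Finset G := fun j =>
    Nat.rec ((0:ℕ), (∅ : Finset G))
      (fun i p => (f2 p.1 (p.2 ∪ Tof i p.1), p.2 ∪ Tof i p.1)) j
  have hst : ∀ j, st (j+1) =
      (f2 (st j).1 ((st j).2 ∪ Tof j (st j).1), (st j).2 ∪ Tof j (st j).1) :=
    fun j => rfl
  refine ⟨fun j => (st j).1, fun j => f1 j (st j).1, ?_, ?_, ?_, ?_, ?_⟩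
  · -- j ≤ Λ j
    intro j
    show j ≤ (st j).1
    induction j with
    | zero => exact Nat.zero_le _
    | succ j ih =>
      have : (st j).1 + 1 ≤ (st (j+1)).1 := by
        rw [hst j]; exact hf2a _ _
      omega
  · -- monotone
    have hstep : ∀ j, (st j).1 ≤ (st (j+1)).1 := by
      intro j
      have : (st j).1 + 1 ≤ (st (j+1)).1 := by
        rw [hst j]; exact hf2a _ _
      omega
    intro i j hij
    show (st i).1 ≤ (st j).1
    exact monotone_nat_of_le_succ hstep hij
  · -- epsilon small
    intro j
    exact hf1b j (st j).1
  · -- good inclusion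
    intro j a x ha hx
    exact hf1a j (st j).1 a x ha hx
  · -- bad step inclusion
    intro m j hjm a b c d x ha hb hc hd hx
    have hAmono : ∀ i i' : ℕ, i ≤ i' → (st i).2 ⊆ (st i').2 := by
      intro i i' hii
      induction i' with
      | zero => simp_all
      | succ i' ih =>
        rcases Nat.lt_or_ge i (i'+1) with h | h
        · have h' : i ≤ i' := by omega
          refine subset_trans (ih h') ?_
          rw [hst i']
          exact Finset.subset_union_left
        · have : i = i' + 1 := by omega
          subst this; exact subset_refl _
    have hmem : (a * (b * (c * d))) ∈ Tof j (st j).1 := by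
      refine Finset.mem_image.2 ⟨(a, b, c, d), ?_, rfl⟩
      refine Finset.mem_product.2 ⟨?_, Finset.mem_product.2 ⟨hb,
        Finset.mem_product.2 ⟨hc, ?_⟩⟩⟩
      · simp only [Finset.mem_insert, Finset.mem_singleton]; exact ha
      · simp only [Finset.mem_insert, Finset.mem_singleton]; exact hd
    have hmem2 : (a * (b * (c * d))) ∈ (st (m+1)).2 := by
      have h1 : Tof j (st j).1 ⊆ (st (j+1)).2 := by
        rw [hst j]; exact Finset.subset_union_right
      exact hAmono (j+1) (m+1) (by omega) (h1 hmem)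
    have hmem3 : a * (b * (c * d)) ∈ (st m).2 ∪ Tof m (st m).1 := by
      have h2 : (st (m+1)).2 = (st m).2 ∪ Tof m (st m).1 := by rw [hst m]
      exact h2 ▸ hmem2
    have := hf2b (st m).1 ((st m).2 ∪ Tof m (st m).1) (a * (b * (c * d))) hmem3 x hx
    show (a * (b * (c * d))) • x ∈ K ((st (m+1)).1)
    rw [hst m]
    exact this

end Construct
theorem stmt0 {G Y : Type*} [Group G] [Countable G] [MulAction G Y] [Nonempty Y]
    (htrans : ∀ x y : Y, ∃ g : G, g • x = y)
    (K : ℕ → Finset Y) (hKmono : Monotone K) (hKexh : ∀ y : Y, ∃ n, y ∈ K n)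
    (ε : ℕ → ℝ) (hεpos : ∀ n, 0 < ε n) (hεlim : Tendsto ε atTop (nhds 0))
    (ν : ℕ → G → ℝ)
    (hνnonneg : ∀ n g, 0 ≤ ν n g)
    (hνfin : ∀ n, (Function.support (ν n)).Finite)
    (hνprob : ∀ n, ∑' g : G, ν n g = 1)
    (hνsymm : ∀ n (g : G), ν n g = ν n g⁻¹)
    (hTV : ∀ n, ∀ x ∈ K n, ∀ y ∈ K n,
      ∑' z : Y, |transProb (ν n) x z - transProb (ν n) y z| < ε n) :
    ∃ μ : G → ℝ,
      (∀ g, 0 ≤ μ g) ∧ (∑' g : G, μ g = 1) ∧ (∀ g : G, μ g = μ g⁻¹) ∧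
      (∀ g : G, ∃ l : List G, l ≠ [] ∧ (∀ h ∈ l, 0 < μ h) ∧ l.prod = g) ∧
      (∀ f : Y → ℝ, (∃ C : ℝ, ∀ y, |f y| ≤ C) →
        (∀ x : Y, f x = ∑' g : G, μ g * f (g • x)) →
        ∀ y z : Y, f y = f z) := by
  classical
  haveI : Nonempty G := ⟨1⟩
  obtain ⟨γ, hγ⟩ := exists_surjective_nat G
  obtain ⟨Λ, nn, hΛself, hΛmono, hεsmall, hgoodK, hbadK⟩ :=
    construct K hKmono hKexh ε hεlim ν hνfin γ
  set la : ℕ → G → ℝ := fun j a =>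
    ((if a = 1 then (1:ℝ) else 0) + (if a = γ j then 1 else 0) +
      (if a = (γ j)⁻¹ then 1 else 0)) / 3 with hla
  set Fs : ℕ → Finset G := fun j => {1, γ j, (γ j)⁻¹} with hFs
  set Ss : ℕ → Finset G := fun j => (hνfin (nn j)).toFinset with hSs
  set Qs : ℕ → Finset (G × G × G × G) := fun j => Fs j ×ˢ Ss j ×ˢ Ss j ×ˢ Fs j with hQs
  set Wf : ℕ → G × G × G × G → ℝ := fun j q =>
    la j q.1 * (ν (nn j) q.2.1 * (ν (nn j) q.2.2.1 * la j q.2.2.2)) with hWf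
  set piG : G × G × G × G → G := fun q => q.1 * (q.2.1 * (q.2.2.1 * q.2.2.2)) with hpiG
  set ρ : ℕ → G → ℝ := fun j => fmeas (Qs j) (Wf j) piG with hρ
  set c : ℕ → ℝ := fun j => ((j:ℝ)+1)⁻¹ - ((j:ℝ)+2)⁻¹ with hc
  -- basic facts on la
  have hla_nonneg : ∀ j a, 0 ≤ la j a := by
    intro j a; simp only [hla]; split_ifs <;> norm_num
  have hla_sum : ∀ j, ∑ a ∈ Fs j, la j a = 1 := by
    intro j
    simp only [hla, hFs, ← Finset.sum_div]
    rw [Finset.sum_add_distrib, Finset.sum_add_distrib,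
      Finset.sum_ite_eq' _ 1 (fun _ => (1:ℝ)),
      Finset.sum_ite_eq' _ (γ j) (fun _ => (1:ℝ)),
      Finset.sum_ite_eq' _ ((γ j)⁻¹) (fun _ => (1:ℝ))]
    have h1 : (1:G) ∈ ({1, γ j, (γ j)⁻¹} : Finset G) := by simp
    have h2 : (γ j) ∈ ({1, γ j, (γ j)⁻¹} : Finset G) := by simp
    have h3 : ((γ j)⁻¹) ∈ ({1, γ j, (γ j)⁻¹} : Finset G) := by simp
    rw [if_pos h1, if_pos h2, if_pos h3]
    norm_num
  have hla_inv : ∀ j a, la j a⁻¹ = la j a := by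
    intro j a
    simp only [hla, inv_eq_one, inv_inj, inv_eq_iff_eq_inv, inv_one, inv_inv]
    ring
  have hla_pos1 : ∀ j, 0 < la j 1 := by
    intro j; simp only [hla]; split_ifs <;> norm_num
  have hla_posγ : ∀ j, 0 < la j (γ j) := by
    intro j; simp only [hla]; split_ifs <;> norm_num
  have hmemF : ∀ j a, a ∈ Fs j ↔ (a = 1 ∨ a = γ j ∨ a = (γ j)⁻¹) := by
    intro j a; simp [hFs]
  have hFinv : ∀ j a, a ∈ Fs j → a⁻¹ ∈ Fs j := by
    intro j a ha
    rw [hmemF] at ha ⊢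
    rcases ha with h | h | h
    · left; simp [h]
    · right; right; simp [h]
    · right; left; simp [h]
  have hSmem : ∀ j b, b ∈ Ss j ↔ ν (nn j) b ≠ 0 := by
    intro j b; simp [hSs, Function.mem_support]
  have hSinv : ∀ j b, b ∈ Ss j → b⁻¹ ∈ Ss j := by
    intro j b hb
    rw [hSmem] at hb ⊢
    rw [← hνsymm]; exact hb
  have hν_sumS : ∀ j, ∑ b ∈ Ss j, ν (nn j) b = 1 := by
    intro j
    have h0 : ∑' g : G, ν (nn j) g = ∑ b ∈ Ss j, ν (nn j) b := by
      refine tsum_eq_sum fun b hb => ?_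
      by_contra hν
      exact hb ((hSmem j b).2 hν)
    rw [← h0, hνprob]
  have hW_nonneg : ∀ j q, 0 ≤ Wf j q := by
    intro j q
    simp only [hWf]
    exact mul_nonneg (hla_nonneg _ _) (mul_nonneg (hνnonneg _ _)
      (mul_nonneg (hνnonneg _ _) (hla_nonneg _ _)))
  have hW_sum : ∀ j, ∑ q ∈ Qs j, Wf j q = 1 := by
    intro j
    obtain ⟨x0⟩ := (inferInstance : Nonempty Y)
    have hq := quad_sum (Fs j) (Ss j) (la j) (ν (nn j)) (fun _ => (1:ℝ)) x0
    simp only [mul_one] at hq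
    simp only [hWf, hQs]
    rw [hq, hν_sumS j]
    simp only [mul_one]
    rw [hν_sumS j]
    simp only [mul_one]
    rw [hla_sum j]
    simp only [mul_one]
    exact hla_sum j
  have hρ_nonneg : ∀ j g, 0 ≤ ρ j g := by
    intro j g; simp only [hρ]; exact fmeas_nonneg (fun q _ => hW_nonneg j q)
  have hρ_mass : ∀ j, ∑' g : G, ρ j g = 1 := by
    intro j; simp only [hρ]; rw [fmeas_sum]; exact hW_sum j
  have hρ_le_one : ∀ j g, ρ j g ≤ 1 := by
    intro j g; simp only [hρ]
    calc fmeas (Qs j) (Wf j) piG g ≤ ∑ q ∈ Qs j, Wf j q :=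
          fmeas_le_sum (fun q _ => hW_nonneg j q)
      _ = 1 := hW_sum j
  have hρ_summable : ∀ j, Summable (ρ j) := by
    intro j; simp only [hρ]; exact fmeas_summable _ _ _
  have hρ_symm : ∀ j g, ρ j g⁻¹ = ρ j g := by
    intro j g
    simp only [hρ, fmeas]
    refine Finset.sum_nbij' (i := fun q : G×G×G×G => (q.2.2.2⁻¹, q.2.2.1⁻¹, q.2.1⁻¹, q.1⁻¹))
      (j := fun q : G×G×G×G => (q.2.2.2⁻¹, q.2.2.1⁻¹, q.2.1⁻¹, q.1⁻¹)) ?_ ?_ ?_ ?_ ?_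
    · rintro ⟨a, b, cc, d⟩ hq
      rw [Finset.mem_filter] at hq ⊢
      obtain ⟨hqQ, hqπ⟩ := hq
      simp only [hQs, Finset.mem_product] at hqQ
      obtain ⟨ha, hb, hcc, hd⟩ := hqQ
      constructor
      · simp only [hQs, Finset.mem_product]
        exact ⟨hFinv j _ hd, hSinv j _ hcc, hSinv j _ hb, hFinv j _ ha⟩
      · simp only [hpiG] at hqπ ⊢
        apply inv_injective
        rw [← hqπ]
        simp [mul_assoc]
    · rintro ⟨a, b, cc, d⟩ hq
      rw [Finset.mem_filter] at hq ⊢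
      obtain ⟨hqQ, hqπ⟩ := hq
      simp only [hQs, Finset.mem_product] at hqQ
      obtain ⟨ha, hb, hcc, hd⟩ := hqQ
      constructor
      · simp only [hQs, Finset.mem_product]
        exact ⟨hFinv j _ hd, hSinv j _ hcc, hSinv j _ hb, hFinv j _ ha⟩
      · simp only [hpiG] at hqπ ⊢
        rw [← hqπ]
        simp [mul_assoc]
    · rintro ⟨a, b, cc, d⟩ _; simp
    · rintro ⟨a, b, cc, d⟩ _; simp
    · rintro ⟨a, b, cc, d⟩ _
      simp only [hWf]
      rw [hla_inv, hla_inv, ← hνsymm, ← hνsymm]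
      ring
  -- facts on c
  have hc_nonneg : ∀ j, 0 ≤ c j := by
    intro j
    simp only [hc, sub_nonneg]
    have h1 : (0:ℝ) < (j:ℝ) + 1 := by positivity
    have := inv_anti₀ h1 (by linarith : ((j:ℝ)+1) ≤ (j:ℝ)+2)
    linarith
  have hc_pos : ∀ j, 0 < c j := by
    intro j
    simp only [hc, sub_pos]
    have h1 : (0:ℝ) < (j:ℝ) + 1 := by positivity
    exact inv_strictAnti₀ h1 (by linarith)
  have hc_partial : ∀ N, ∑ j ∈ Finset.range N, c j = 1 - ((N:ℝ)+1)⁻¹ := by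
    intro N
    have h0 : ∀ j ∈ Finset.range N, c j =
        (fun i : ℕ => ((i:ℝ)+1)⁻¹) j - (fun i : ℕ => ((i:ℝ)+1)⁻¹) (j+1) := by
      intro j _
      simp only [hc]
      push_cast
      ring_nf
    rw [Finset.sum_congr rfl h0, Finset.sum_range_sub' (fun i : ℕ => ((i:ℝ)+1)⁻¹) N]
    norm_num
  have hc_summable : Summable c := by
    refine summable_of_sum_range_le (c := 1) hc_nonneg fun n => ?_
    rw [hc_partial n]
    have : (0:ℝ) ≤ ((n:ℝ)+1)⁻¹ := by positivity
    linarith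
  have hc_tsum : ∑' j, c j = 1 := by
    have hha := (Summable.hasSum_iff_tendsto_nat hc_summable).1 hc_summable.hasSum
    have hlim : Tendsto (fun N : ℕ => ∑ j ∈ Finset.range N, c j) atTop (nhds 1) := by
      have h0 : Tendsto (fun N : ℕ => ((N:ℝ)+1)⁻¹) atTop (nhds 0) := by
        simpa [one_div] using tendsto_one_div_add_atTop_nhds_zero_nat (𝕜 := ℝ)
      have hone : Tendsto (fun _ : ℕ => (1:ℝ)) atTop (nhds 1) := tendsto_const_nhds
      have := hone.sub h0
      simp only [sub_zero] at this
      refine this.congr fun N => ?_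
      rw [hc_partial N]
    exact tendsto_nhds_unique hha hlim
  have hc_shift_summable : ∀ m : ℕ, Summable (fun i => c (i+m)) := by
    intro m; exact (summable_nat_add_iff m).2 hc_summable
  have hc_tail : ∀ m : ℕ, ∑' i : ℕ, c (i+m) = ((m:ℝ)+1)⁻¹ := by
    intro m
    have hpart : ∀ N, ∑ i ∈ Finset.range N, c (i+m) =
        ((m:ℝ)+1)⁻¹ - (((N:ℝ)+(m:ℝ))+1)⁻¹ := by
      intro N
      have h0 : ∀ i ∈ Finset.range N, c (i+m) =
          (fun i : ℕ => ((i:ℝ)+(m:ℝ)+1)⁻¹) i - (fun i : ℕ => ((i:ℝ)+(m:ℝ)+1)⁻¹) (i+1) := by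
        intro i _
        simp only [hc]
        push_cast
        ring_nf
      rw [Finset.sum_congr rfl h0, Finset.sum_range_sub' (fun i : ℕ => ((i:ℝ)+(m:ℝ)+1)⁻¹) N]
      norm_num
    have hha := (Summable.hasSum_iff_tendsto_nat (hc_shift_summable m)).1
      (hc_shift_summable m).hasSum
    have hlim : Tendsto (fun N : ℕ => ∑ i ∈ Finset.range N, c (i+m)) atTop
        (nhds (((m:ℝ)+1)⁻¹)) := by
      have h0 : Tendsto (fun N : ℕ => (((N:ℝ)+(m:ℝ))+1)⁻¹) atTop (nhds 0) := by
        have hb : Tendsto (fun N : ℕ => ((N:ℝ)+1)⁻¹) atTop (nhds 0) := by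
          simpa [one_div] using tendsto_one_div_add_atTop_nhds_zero_nat (𝕜 := ℝ)
        refine squeeze_zero (fun N => by positivity) (fun N => ?_) hb
        have hm0 : (0:ℝ) ≤ (m:ℝ) := Nat.cast_nonneg m
        have h1 : (0:ℝ) < (N:ℝ) + 1 := by positivity
        exact inv_anti₀ h1 (by linarith)
      have hone : Tendsto (fun _ : ℕ => ((m:ℝ)+1)⁻¹) atTop (nhds (((m:ℝ)+1)⁻¹)) :=
        tendsto_const_nhds
      have := hone.sub h0
      simp only [sub_zero] at this
      refine this.congr fun N => ?_
      rw [hpart N]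
    exact tendsto_nhds_unique hha hlim
  -- the measure
  set μm : G → ℝ := fun g => ∑' j, c j * ρ j g with hμ
  have hcρ_nonneg : ∀ g j, 0 ≤ c j * ρ j g :=
    fun g j => mul_nonneg (hc_nonneg j) (hρ_nonneg j g)
  have hcρ_summable : ∀ g, Summable (fun j => c j * ρ j g) := by
    intro g
    refine Summable.of_nonneg_of_le (hcρ_nonneg g) (fun j => ?_) hc_summable
    calc c j * ρ j g ≤ c j * 1 := mul_le_mul_of_nonneg_left (hρ_le_one j g) (hc_nonneg j)
      _ = c j := mul_one _
  have hSu2 : Summable (fun p : ℕ × G => c p.1 * ρ p.1 p.2) := by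
    refine (summable_prod_of_nonneg (fun p => hcρ_nonneg p.2 p.1)).2 ⟨?_, ?_⟩
    · intro j
      exact (hρ_summable j).mul_left (c j)
    · refine hc_summable.congr fun j => ?_
      show c j = ∑' g : G, c j * ρ j g
      rw [tsum_mul_left, hρ_mass j, mul_one]
  have hμ_nonneg : ∀ g, 0 ≤ μm g := by
    intro g; exact tsum_nonneg (hcρ_nonneg g)
  have hμ_mass : ∑' g : G, μm g = 1 := by
    simp only [hμ]
    have hswap := Summable.tsum_comm' (f := fun (j : ℕ) (g : G) => c j * ρ j g) hSu2
      (fun j => (hρ_summable j).mul_left (c j)) (fun g => hcρ_summable g)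
    rw [hswap]
    rw [tsum_congr (fun j => by rw [tsum_mul_left, hρ_mass j, mul_one] :
      ∀ j : ℕ, ∑' g : G, c j * ρ j g = c j)]
    exact hc_tsum
  have hμ_symm : ∀ g, μm g = μm g⁻¹ := by
    intro g
    simp only [hμ]
    exact (tsum_congr fun j => by rw [hρ_symm j g]).symm
  have hμ_pos : ∀ g, 0 < μm g := by
    intro g
    obtain ⟨j, hj⟩ := hγ g
    have hSne : (Ss j).Nonempty := by
      by_contra h
      rw [Finset.not_nonempty_iff_eq_empty] at h
      have h1 := hν_sumS j
      rw [h] at h1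
      simp at h1
    obtain ⟨b0, hb0⟩ := hSne
    have hb0pos : 0 < ν (nn j) b0 :=
      lt_of_le_of_ne (hνnonneg _ _) (Ne.symm ((hSmem j b0).1 hb0))
    have hb0invpos : 0 < ν (nn j) b0⁻¹ := by rw [← hνsymm]; exact hb0pos
    have hq0Q : ((γ j, b0, b0⁻¹, 1) : G×G×G×G) ∈ Qs j := by
      simp only [hQs]
      refine Finset.mem_product.2 ⟨?_, Finset.mem_product.2 ⟨hb0,
        Finset.mem_product.2 ⟨hSinv j b0 hb0, ?_⟩⟩⟩
      · rw [hmemF]; right; left; rfl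
      · rw [hmemF]; left; rfl
    have hπq0 : piG ((γ j, b0, b0⁻¹, 1) : G×G×G×G) = g := by
      simp only [hpiG]
      simp [hj]
    have hWq0 : 0 < Wf j ((γ j, b0, b0⁻¹, 1) : G×G×G×G) := by
      simp only [hWf]
      exact mul_pos (hla_posγ j) (mul_pos hb0pos (mul_pos hb0invpos (hla_pos1 j)))
    have h1 : Wf j ((γ j, b0, b0⁻¹, 1) : G×G×G×G) ≤ ρ j g := by
      simp only [hρ]
      exact fmeas_single_le (fun q _ => hW_nonneg j q) hq0Q hπq0
    have h2 : c j * ρ j g ≤ μm g :=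
      Summable.le_tsum (hcρ_summable g) j (fun i _ => hcρ_nonneg g i)
    calc (0:ℝ) < c j * Wf j ((γ j, b0, b0⁻¹, 1) : G×G×G×G) :=
          mul_pos (hc_pos j) hWq0
      _ ≤ c j * ρ j g := mul_le_mul_of_nonneg_left h1 (hc_nonneg j)
      _ ≤ μm g := h2
  refine ⟨μm, hμ_nonneg, hμ_mass, hμ_symm, ?_, ?_⟩
  · intro g
    refine ⟨[g], by simp, ?_, by simp⟩
    intro h hh
    rw [List.mem_singleton] at hh
    subst hh
    exact hμ_pos h
  · -- Liouville property
    rintro f ⟨C, hfC⟩ hharm y z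
    have hC0 : 0 ≤ C := le_trans (abs_nonneg _) (hfC (Classical.arbitrary Y))
    set E : ℕ → Y → ℝ := fun j x => ∑ q ∈ Qs j, Wf j q * f (piG q • x) with hE
    have hE_abs : ∀ j x, |E j x| ≤ C := by
      intro j x
      simp only [hE]
      calc |∑ q ∈ Qs j, Wf j q * f (piG q • x)|
          ≤ ∑ q ∈ Qs j, |Wf j q * f (piG q • x)| := Finset.abs_sum_le_sum_abs _ _
        _ ≤ ∑ q ∈ Qs j, Wf j q * C := by
            refine Finset.sum_le_sum fun q _ => ?_
            rw [abs_mul, abs_of_nonneg (hW_nonneg j q)]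
            exact mul_le_mul_of_nonneg_left (hfC _) (hW_nonneg j q)
        _ = C := by rw [← Finset.sum_mul, hW_sum j, one_mul]
    have hρ_zero : ∀ j g, g ∉ (Qs j).image piG → ρ j g = 0 := by
      intro j g hg
      simp only [hρ]
      exact fmeas_eq_zero hg
    have hdecomp : ∀ x, f x = ∑' j, c j * E j x := by
      intro x
      have h1 : ∀ g : G, μm g * f (g • x) = ∑' j, c j * ρ j g * f (g • x) := by
        intro g
        have : μm g = ∑' j, c j * ρ j g := by rw [hμ]
        rw [this, tsum_mul_right]
      have hSu : Summable (Function.uncurry fun (j : ℕ) (g : G) =>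
          c j * ρ j g * f (g • x)) := by
        apply Summable.of_abs
        refine Summable.of_nonneg_of_le (fun p => abs_nonneg _) (fun p => ?_)
          (hSu2.mul_left C)
        show |c p.1 * ρ p.1 p.2 * f (p.2 • x)| ≤ C * (c p.1 * ρ p.1 p.2)
        rw [abs_mul, abs_of_nonneg (hcρ_nonneg p.2 p.1)]
        calc c p.1 * ρ p.1 p.2 * |f (p.2 • x)| ≤ c p.1 * ρ p.1 p.2 * C :=
              mul_le_mul_of_nonneg_left (hfC _) (hcρ_nonneg p.2 p.1)
          _ = C * (c p.1 * ρ p.1 p.2) := by ring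
      have hsumg : ∀ j, Summable (fun g : G => c j * ρ j g * f (g • x)) := by
        intro j
        refine summable_of_ne_finset_zero (s := (Qs j).image piG) fun g hg => ?_
        rw [hρ_zero j g hg, mul_zero, zero_mul]
      have hsumj : ∀ g : G, Summable (fun j : ℕ => c j * ρ j g * f (g • x)) :=
        fun g => (hcρ_summable g).mul_right (f (g • x))
      have hswap := Summable.tsum_comm' (f := fun (j : ℕ) (g : G) => c j * ρ j g * f (g • x))
        hSu hsumg hsumj
      calc f x = ∑' g : G, μm g * f (g • x) := hharm x
        _ = ∑' g : G, ∑' j : ℕ, c j * ρ j g * f (g • x) := tsum_congr h1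
        _ = ∑' j : ℕ, ∑' g : G, c j * ρ j g * f (g • x) := hswap
        _ = ∑' j : ℕ, c j * E j x := by
            refine tsum_congr fun j => ?_
            have h2 : ∀ g : G, c j * ρ j g * f (g • x) = c j * (ρ j g * f (g • x)) :=
              fun g => by ring
            rw [tsum_congr h2, tsum_mul_left]
            congr 1
            have h3 : ∑' g : G, ρ j g * f (g • x)
                = ∑ q ∈ Qs j, Wf j q * f (piG q • x) := by
              simp only [hρ]
              exact fmeas_tsum_mul (Qs j) (Wf j) piG (fun g => f (g • x))
            rw [h3, hE]
    have hEgood : ∀ m j, m ≤ j → ∀ xx ∈ K (Λ m), ∀ yy ∈ K (Λ m),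
        |E j xx - E j yy| ≤ C * (1/2 : ℝ)^j := by
      intro m j hmj xx hxx yy hyy
      have hxj : xx ∈ K (Λ j) := hKmono (hΛmono m j hmj) hxx
      have hyj : yy ∈ K (Λ j) := hKmono (hΛmono m j hmj) hyy
      have hnest : ∀ w : Y, E j w = ∑ a ∈ Fs j, la j a * ∑ d ∈ Fs j, la j d *
          ∑ cc ∈ Ss j, ν (nn j) cc * ∑ b ∈ Ss j, ν (nn j) b *
            f (a • (b • (cc • (d • w)))) := by
        intro w
        simp only [hE, hQs, hWf, hpiG]
        exact quad_sum (Fs j) (Ss j) (la j) (ν (nn j)) f w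
      have hTa : ∀ (a d : G), d ∈ Fs j →
          |(∑ cc ∈ Ss j, ν (nn j) cc * ∑ b ∈ Ss j, ν (nn j) b *
              f (a • (b • (cc • (d • xx))))) -
            (∑ cc ∈ Ss j, ν (nn j) cc * ∑ b ∈ Ss j, ν (nn j) b *
              f (a • (b • (cc • (d • yy)))))| ≤ (1/2 : ℝ)^j * C := by
        intro a d hd
        have hdx : d • xx ∈ K (nn j) := hgoodK j d xx ((hmemF j d).1 hd) hxj
        have hdy : d • yy ∈ K (nn j) := hgoodK j d yy ((hmemF j d).1 hd) hyj
        have hgs := good_step (ν (nn j)) (hνnonneg (nn j)) (hνfin (nn j)) (hν_sumS j)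
          (fun w => f (a • w)) C (fun w => hfC _) (d • xx) (d • yy)
        have htv := hTV (nn j) (d • xx) hdx (d • yy) hdy
        refine le_trans hgs ?_
        exact mul_le_mul_of_nonneg_right (le_trans (le_of_lt htv) (hεsmall j)) hC0
      have hSa : ∀ a : G,
          |(∑ d ∈ Fs j, la j d * ∑ cc ∈ Ss j, ν (nn j) cc * ∑ b ∈ Ss j, ν (nn j) b *
              f (a • (b • (cc • (d • xx))))) -
            (∑ d ∈ Fs j, la j d * ∑ cc ∈ Ss j, ν (nn j) cc * ∑ b ∈ Ss j, ν (nn j) b *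
              f (a • (b • (cc • (d • yy)))))| ≤ (1/2 : ℝ)^j * C := by
        intro a
        rw [← Finset.sum_sub_distrib]
        calc |∑ d ∈ Fs j, (la j d * ∑ cc ∈ Ss j, ν (nn j) cc * ∑ b ∈ Ss j, ν (nn j) b *
              f (a • (b • (cc • (d • xx)))) -
              la j d * ∑ cc ∈ Ss j, ν (nn j) cc * ∑ b ∈ Ss j, ν (nn j) b *
              f (a • (b • (cc • (d • yy)))))|
            ≤ ∑ d ∈ Fs j, |la j d * ∑ cc ∈ Ss j, ν (nn j) cc * ∑ b ∈ Ss j, ν (nn j) b *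
              f (a • (b • (cc • (d • xx)))) -
              la j d * ∑ cc ∈ Ss j, ν (nn j) cc * ∑ b ∈ Ss j, ν (nn j) b *
              f (a • (b • (cc • (d • yy))))| := Finset.abs_sum_le_sum_abs _ _
          _ ≤ ∑ d ∈ Fs j, la j d * ((1/2 : ℝ)^j * C) := by
              refine Finset.sum_le_sum fun d hd => ?_
              rw [← mul_sub, abs_mul, abs_of_nonneg (hla_nonneg j d)]
              exact mul_le_mul_of_nonneg_left (hTa a d hd) (hla_nonneg j d)
          _ = (1/2 : ℝ)^j * C := by rw [← Finset.sum_mul, hla_sum j, one_mul]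
      rw [hnest xx, hnest yy, ← Finset.sum_sub_distrib]
      calc |∑ a ∈ Fs j, (la j a * ∑ d ∈ Fs j, la j d *
            ∑ cc ∈ Ss j, ν (nn j) cc * ∑ b ∈ Ss j, ν (nn j) b *
              f (a • (b • (cc • (d • xx)))) -
            la j a * ∑ d ∈ Fs j, la j d *
            ∑ cc ∈ Ss j, ν (nn j) cc * ∑ b ∈ Ss j, ν (nn j) b *
              f (a • (b • (cc • (d • yy)))))|
          ≤ ∑ a ∈ Fs j, |la j a * ∑ d ∈ Fs j, la j d *
            ∑ cc ∈ Ss j, ν (nn j) cc * ∑ b ∈ Ss j, ν (nn j) b *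
              f (a • (b • (cc • (d • xx)))) -
            la j a * ∑ d ∈ Fs j, la j d *
            ∑ cc ∈ Ss j, ν (nn j) cc * ∑ b ∈ Ss j, ν (nn j) b *
              f (a • (b • (cc • (d • yy))))| := Finset.abs_sum_le_sum_abs _ _
        _ ≤ ∑ a ∈ Fs j, la j a * ((1/2 : ℝ)^j * C) := by
            refine Finset.sum_le_sum fun a _ => ?_
            rw [← mul_sub, abs_mul, abs_of_nonneg (hla_nonneg j a)]
            exact mul_le_mul_of_nonneg_left (hSa a) (hla_nonneg j a)
        _ = (1/2 : ℝ)^j * C := by rw [← Finset.sum_mul, hla_sum j, one_mul]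
        _ = C * (1/2 : ℝ)^j := mul_comm _ _
    have main : ∀ k m : ℕ, ∀ xx ∈ K (Λ m), ∀ yy ∈ K (Λ m),
        |f xx - f yy| ≤ 2*C*((m:ℝ)/((m:ℝ)+(k:ℝ))) + 2*C*(1/2 : ℝ)^m := by
      intro k
      induction k with
      | zero =>
        intro m xx hxx yy hyy
        have h2C : |f xx - f yy| ≤ 2*C := by
          rw [sub_eq_add_neg]
          refine le_trans (abs_add_le _ _) ?_
          rw [abs_neg]
          linarith [hfC xx, hfC yy]
        rcases Nat.eq_zero_or_pos m with hm | hm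
        · subst hm
          push_cast
          norm_num
          linarith [h2C]
        · have hm0 : (0:ℝ) < (m:ℝ) := by exact_mod_cast hm
          have hd1 : (m:ℝ)/((m:ℝ)+((0:ℕ):ℝ)) = 1 := by
            push_cast
            rw [add_zero, div_self (ne_of_gt hm0)]
          rw [hd1]
          have hpw : (0:ℝ) ≤ 2*C*(1/2 : ℝ)^m := by positivity
          linarith [h2C]
      | succ k ih =>
        intro m xx hxx yy hyy
        have hEd_s : Summable (fun j => c j * |E j xx - E j yy|) := by
          refine Summable.of_nonneg_of_le
            (fun j => mul_nonneg (hc_nonneg j) (abs_nonneg _)) (fun j => ?_)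
            (hc_summable.mul_right (2*C))
          refine mul_le_mul_of_nonneg_left ?_ (hc_nonneg j)
          rw [sub_eq_add_neg]
          refine le_trans (abs_add_le _ _) ?_
          rw [abs_neg]
          linarith [hE_abs j xx, hE_abs j yy]
        have hsx : Summable (fun j => c j * E j xx) := by
          apply Summable.of_abs
          refine Summable.of_nonneg_of_le (fun j => abs_nonneg _) (fun j => ?_)
            (hc_summable.mul_right C)
          rw [abs_mul, abs_of_nonneg (hc_nonneg j)]
          exact mul_le_mul_of_nonneg_left (hE_abs j xx) (hc_nonneg j)
        have hsy : Summable (fun j => c j * E j yy) := by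
          apply Summable.of_abs
          refine Summable.of_nonneg_of_le (fun j => abs_nonneg _) (fun j => ?_)
            (hc_summable.mul_right C)
          rw [abs_mul, abs_of_nonneg (hc_nonneg j)]
          exact mul_le_mul_of_nonneg_left (hE_abs j yy) (hc_nonneg j)
        have hstep : f xx - f yy = ∑' j, c j * (E j xx - E j yy) := by
          rw [hdecomp xx, hdecomp yy, ← Summable.tsum_sub hsx hsy]
          exact tsum_congr fun j => by ring
        have habs : |f xx - f yy| ≤ ∑' j, c j * |E j xx - E j yy| := by
          rw [hstep, ← Real.norm_eq_abs]
          refine le_trans (norm_tsum_le_tsum_norm ?_) ?_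
          · refine hEd_s.congr fun j => ?_
            rw [Real.norm_eq_abs, abs_mul, abs_of_nonneg (hc_nonneg j)]
          · refine le_of_eq (tsum_congr fun j => ?_)
            rw [Real.norm_eq_abs, abs_mul, abs_of_nonneg (hc_nonneg j)]
        have hsplit : ∑' j, c j * |E j xx - E j yy|
            = ∑ j ∈ Finset.range m, c j * |E j xx - E j yy|
              + ∑' i : ℕ, c (i+m) * |E (i+m) xx - E (i+m) yy| :=
          (Summable.sum_add_tsum_nat_add m hEd_s).symm
        set Bd1 : ℝ := 2*C*(((m:ℝ)+1)/(((m:ℝ)+1)+(k:ℝ))) + 2*C*(1/2 : ℝ)^(m+1) with hBd1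
        have hhead : ∑ j ∈ Finset.range m, c j * |E j xx - E j yy|
            ≤ (1 - ((m:ℝ)+1)⁻¹) * Bd1 := by
          have hone : ∀ j ∈ Finset.range m, c j * |E j xx - E j yy| ≤ c j * Bd1 := by
            intro j hj
            have hjm : j ≤ m := le_of_lt (Finset.mem_range.1 hj)
            have hEd : |E j xx - E j yy| ≤ Bd1 := by
              have hrw : E j xx - E j yy
                  = ∑ q ∈ Qs j, Wf j q * (f (piG q • xx) - f (piG q • yy)) := by
                simp only [hE]
                rw [← Finset.sum_sub_distrib]
                exact Finset.sum_congr rfl fun q _ => by ring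
              rw [hrw]
              calc |∑ q ∈ Qs j, Wf j q * (f (piG q • xx) - f (piG q • yy))|
                  ≤ ∑ q ∈ Qs j, |Wf j q * (f (piG q • xx) - f (piG q • yy))| :=
                    Finset.abs_sum_le_sum_abs _ _
                _ ≤ ∑ q ∈ Qs j, Wf j q * Bd1 := by
                    refine Finset.sum_le_sum fun q hq => ?_
                    rw [abs_mul, abs_of_nonneg (hW_nonneg j q)]
                    refine mul_le_mul_of_nonneg_left ?_ (hW_nonneg j q)
                    simp only [hQs, Finset.mem_product] at hq
                    obtain ⟨ha, hb, hcc, hd⟩ := hq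
                    have hx1 : piG q • xx ∈ K (Λ (m+1)) := by
                      have := hbadK m j hjm q.1 q.2.1 q.2.2.1 q.2.2.2 xx
                        ((hmemF j _).1 ha) hb hcc ((hmemF j _).1 hd) hxx
                      simpa [hpiG] using this
                    have hy1 : piG q • yy ∈ K (Λ (m+1)) := by
                      have := hbadK m j hjm q.1 q.2.1 q.2.2.1 q.2.2.2 yy
                        ((hmemF j _).1 ha) hb hcc ((hmemF j _).1 hd) hyy
                      simpa [hpiG] using this
                    have hih := ih (m+1) (piG q • xx) hx1 (piG q • yy) hy1
                    rw [hBd1]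
                    push_cast at hih ⊢
                    linarith [hih]
                _ = Bd1 := by rw [← Finset.sum_mul, hW_sum j, one_mul]
            exact mul_le_mul_of_nonneg_left hEd (hc_nonneg j)
          calc ∑ j ∈ Finset.range m, c j * |E j xx - E j yy|
              ≤ ∑ j ∈ Finset.range m, c j * Bd1 := Finset.sum_le_sum hone
            _ = (∑ j ∈ Finset.range m, c j) * Bd1 := by rw [Finset.sum_mul]
            _ = (1 - ((m:ℝ)+1)⁻¹) * Bd1 := by rw [hc_partial m]
        have htail : ∑' i : ℕ, c (i+m) * |E (i+m) xx - E (i+m) yy|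
            ≤ ((m:ℝ)+1)⁻¹ * ((1/2 : ℝ)^m * C) := by
          have hb : ∀ i : ℕ, c (i+m) * |E (i+m) xx - E (i+m) yy|
              ≤ c (i+m) * ((1/2 : ℝ)^m * C) := by
            intro i
            have h1 : |E (i+m) xx - E (i+m) yy| ≤ C * (1/2 : ℝ)^(i+m) :=
              hEgood m (i+m) (Nat.le_add_left m i) xx hxx yy hyy
            have h2 : C * (1/2 : ℝ)^(i+m) ≤ (1/2 : ℝ)^m * C := by
              rw [pow_add]
              have hp1 : (1/2 : ℝ)^i ≤ 1 := pow_le_one₀ (by norm_num) (by norm_num)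
              have hpi : (0:ℝ) ≤ (1/2 : ℝ)^i := by positivity
              have hpm : (0:ℝ) ≤ (1/2 : ℝ)^m := by positivity
              nlinarith [mul_nonneg (mul_nonneg hC0 hpm) (sub_nonneg.2 hp1)]
            exact mul_le_mul_of_nonneg_left (le_trans h1 h2) (hc_nonneg _)
          have hsl : Summable (fun i : ℕ => c (i+m) * |E (i+m) xx - E (i+m) yy|) := by
            have := (summable_nat_add_iff (f := fun j => c j * |E j xx - E j yy|) m).2 hEd_s
            exact this
          calc ∑' i : ℕ, c (i+m) * |E (i+m) xx - E (i+m) yy|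
              ≤ ∑' i : ℕ, c (i+m) * ((1/2 : ℝ)^m * C) :=
                Summable.tsum_le_tsum hb hsl ((hc_shift_summable m).mul_right _)
            _ = (∑' i : ℕ, c (i+m)) * ((1/2 : ℝ)^m * C) := tsum_mul_right
            _ = ((m:ℝ)+1)⁻¹ * ((1/2 : ℝ)^m * C) := by rw [hc_tail m]
        have hm1 : (0:ℝ) < (m:ℝ)+1 := by positivity
        have hmk : (0:ℝ) < (m:ℝ)+1+(k:ℝ) := by
          have : (0:ℝ) ≤ (k:ℝ) := Nat.cast_nonneg k
          linarith
        have hCp : (0:ℝ) ≤ C * (1/2 : ℝ)^m := by positivity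
        have htotal : |f xx - f yy| ≤ (1 - ((m:ℝ)+1)⁻¹) * Bd1
            + ((m:ℝ)+1)⁻¹ * ((1/2 : ℝ)^m * C) :=
          le_trans habs (le_trans (le_of_eq hsplit) (add_le_add hhead htail))
        rw [hBd1, pow_succ] at htotal
        push_cast
        exact le_trans htotal (arith_combine (m:ℝ) (k:ℝ) C ((1/2 : ℝ)^m) hm1 hmk hCp)
    obtain ⟨my, hmy⟩ := hKexh y
    obtain ⟨mz, hmz⟩ := hKexh z
    have hymem : ∀ m, max my mz ≤ m → y ∈ K (Λ m) := by
      intro m hm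
      refine hKmono ?_ hmy
      exact le_trans (le_trans (le_max_left my mz) hm) (hΛself m)
    have hzmem : ∀ m, max my mz ≤ m → z ∈ K (Λ m) := by
      intro m hm
      refine hKmono ?_ hmz
      exact le_trans (le_trans (le_max_right my mz) hm) (hΛself m)
    have key : ∀ m, max my mz ≤ m → |f y - f z| ≤ 2*C*(1/2 : ℝ)^m := by
      intro m hm
      have hd : Tendsto (fun k : ℕ => (m:ℝ)/((m:ℝ)+(k:ℝ))) atTop (nhds 0) := by
        apply Tendsto.div_atTop (tendsto_const_nhds)
        apply tendsto_atTop_add_const_left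
        exact tendsto_natCast_atTop_atTop
      have hlim : Tendsto (fun k : ℕ => 2*C*((m:ℝ)/((m:ℝ)+(k:ℝ))) + 2*C*(1/2 : ℝ)^m)
          atTop (nhds (2*C*(1/2 : ℝ)^m)) := by
        have hcst : Tendsto (fun _ : ℕ => 2*C*(1/2:ℝ)^m) atTop (nhds (2*C*(1/2:ℝ)^m)) :=
          tendsto_const_nhds
        have h1 := (hd.const_mul (2*C)).add hcst
        simpa using h1
      exact ge_of_tendsto' hlim fun k => main k m y (hymem m hm) z (hzmem m hm)
    have hlim2 : Tendsto (fun m : ℕ => 2*C*(1/2 : ℝ)^m) atTop (nhds 0) := by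
      have h0 : Tendsto (fun m : ℕ => (1/2 : ℝ)^m) atTop (nhds 0) :=
        tendsto_pow_atTop_nhds_zero_of_lt_one (by norm_num) (by norm_num)
      have h1 := h0.const_mul (2*C)
      simpa using h1
    have hle0 : |f y - f z| ≤ 0 := by
      refine ge_of_tendsto hlim2 ?_
      filter_upwards [eventually_ge_atTop (max my mz)] with m hm
      exact key m hm
    have hz0 : f y - f z = 0 := abs_nonpos_iff.1 hle0
    linarith [hz0]
end

section
/- Let n ∈ ℕ and let w : ℕ → ℝ be a probability mass function supported on {1, 2, …, n+1}, i.e., w(k) ≥ 0 for all k, w(k) = 0 for k ∉ {1, …, n+1}, and ∑_{k=1}^{n+1} w(k) = 1. Then for every real ε > 0 one has ∑_{k=1}^{n+1} w(k) · P(Bin(k, 1/2) < εn) ≤ (∑_{k : k < 4εn} w(k)) + exp(−εn/2), where P(Bin(k, 1/2) < εn) denotes the probability that a binomial random variable with k trials and success probability 1/2 takes a value strictly less than εn. -/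
/-- `P(Bin(k, 1/2) < t) = ∑_{0 ≤ j < t} (k choose j) 2^{-k}`: the probability that a
binomial random variable with `k` trials and success probability `1/2` is `< t`. -/
noncomputable def binCdfLT (k : ℕ) (t : ℝ) : ℝ :=
  ∑ j ∈ Finset.range ⌈t⌉₊, (k.choose j : ℝ) / 2 ^ k

lemma choose_sum_le (k m : ℕ) : ∑ j ∈ Finset.range m, k.choose j ≤ 2 ^ k := by
  calc ∑ j ∈ Finset.range m, k.choose j
      ≤ ∑ j ∈ Finset.range (max m (k+1)), k.choose j :=
        Finset.sum_le_sum_of_subset (Finset.range_subset_range.2 (le_max_left _ _))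
    _ = ∑ j ∈ Finset.range (k+1), k.choose j := by
        refine (Finset.sum_subset (Finset.range_subset_range.2 (le_max_right _ _)) ?_).symm
        intro x _ hx
        simp only [Finset.mem_range, not_lt] at hx
        exact Nat.choose_eq_zero_of_lt hx
    _ = 2 ^ k := Nat.sum_range_choose k

lemma binCdfLT_le_one (k : ℕ) (t : ℝ) : binCdfLT k t ≤ 1 := by
  unfold binCdfLT
  rw [← Finset.sum_div, div_le_one (by positivity)]
  calc (∑ j ∈ Finset.range ⌈t⌉₊, (k.choose j : ℝ))
      = ((∑ j ∈ Finset.range ⌈t⌉₊, k.choose j : ℕ) : ℝ) := by push_cast; ring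
    _ ≤ ((2 ^ k : ℕ) : ℝ) := by exact_mod_cast choose_sum_le k _
    _ = 2 ^ k := by push_cast; ring

lemma chernoff (k : ℕ) (t : ℝ) (ht : 0 ≤ t) (hk : 4 * t ≤ k) :
    binCdfLT k t ≤ Real.exp (-t / 2) := by
  rcases eq_or_lt_of_le ht with h0 | ht0
  · rw [binCdfLT, ← h0]
    simp [Real.exp_nonneg]
  have hkpos : (0:ℝ) < k := lt_of_lt_of_le (by linarith) hk
  have htk : t ≤ (k:ℝ) := by linarith
  have hceil : ⌈t⌉₊ ≤ k := Nat.ceil_le.2 htk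
  set r : ℝ := 2/5 with hr
  have hr0 : (0:ℝ) < r := by norm_num [hr]
  have hrt : (0:ℝ) ≤ r ^ (-t) := (Real.rpow_pos_of_pos hr0 _).le
  have stepA : binCdfLT k t ≤
      ∑ j ∈ Finset.range ⌈t⌉₊, r ^ (-t) * (r ^ j * 1 ^ (k - j) * (k.choose j : ℝ) / 2 ^ k) := by
    unfold binCdfLT
    refine Finset.sum_le_sum ?_
    intro j hj
    have hjt : (j:ℝ) < t := by
      have hlt : j < ⌈t⌉₊ := Finset.mem_range.1 hj
      have h1 : (j:ℝ) + 1 ≤ (⌈t⌉₊:ℝ) := by exact_mod_cast hlt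
      have h2 : (⌈t⌉₊:ℝ) < t + 1 := Nat.ceil_lt_add_one ht
      linarith
    have hpow : 1 ≤ r ^ ((j:ℝ) - t) :=
      Real.one_le_rpow_of_pos_of_le_one_of_nonpos hr0 (by norm_num [hr]) (by linarith)
    have heq : r ^ (-t) * (r ^ j * 1 ^ (k - j) * (k.choose j : ℝ) / 2 ^ k)
        = (k.choose j : ℝ) / 2 ^ k * r ^ ((j:ℝ) - t) := by
      rw [sub_eq_add_neg, Real.rpow_add hr0, Real.rpow_natCast]
      ring
    rw [heq]
    have hd : (0:ℝ) ≤ (k.choose j : ℝ) / 2 ^ k := by positivity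
    nlinarith
  have stepB : ∑ j ∈ Finset.range ⌈t⌉₊, r ^ (-t) * (r ^ j * 1 ^ (k - j) * (k.choose j : ℝ) / 2 ^ k)
      ≤ ∑ j ∈ Finset.range (k+1), r ^ (-t) * (r ^ j * 1 ^ (k - j) * (k.choose j : ℝ) / 2 ^ k) := by
    refine Finset.sum_le_sum_of_subset_of_nonneg (Finset.range_subset_range.2 (by omega)) ?_
    intro j _ _
    have : (0:ℝ) ≤ r ^ j := (pow_pos hr0 j).le
    positivity
  have hbin : ∑ j ∈ Finset.range (k+1), r ^ (-t) * (r ^ j * 1 ^ (k - j) * (k.choose j : ℝ) / 2 ^ k)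
      = r ^ (-t) * ((7:ℝ)/10) ^ k := by
    rw [← Finset.mul_sum, ← Finset.sum_div, ← add_pow r 1 k, hr]
    rw [← div_pow]
    norm_num
  have step1 : binCdfLT k t ≤ r ^ (-t) * ((7:ℝ)/10) ^ k := by
    rw [← hbin]; exact stepA.trans stepB
  have step3 : ((7:ℝ)/10) ^ k ≤ ((7:ℝ)/10) ^ (4 * t : ℝ) := by
    rw [← Real.rpow_natCast (7/10 : ℝ) k]
    exact Real.rpow_le_rpow_of_exponent_ge (by norm_num) (by norm_num) hk
  have step4 : binCdfLT k t ≤ r ^ (-t) * ((7:ℝ)/10) ^ (4 * t : ℝ) :=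
    step1.trans (mul_le_mul_of_nonneg_left step3 hrt)
  have h4 : ((7:ℝ)/10) ^ (4 * t : ℝ) = ((2401:ℝ)/10000) ^ (t:ℝ) := by
    rw [Real.rpow_mul (by norm_num : (0:ℝ) ≤ 7/10),
      show ((7:ℝ)/10) ^ (4:ℝ) = 2401/10000 by
        rw [show (4:ℝ) = ((4:ℕ):ℝ) by norm_num, Real.rpow_natCast]; norm_num]
  have h5 : r ^ (-t) = ((5:ℝ)/2) ^ (t:ℝ) := by
    rw [Real.rpow_neg hr0.le, ← Real.inv_rpow hr0.le, hr]; norm_num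
  have halg : r ^ (-t) * ((7:ℝ)/10) ^ (4 * t : ℝ) = ((2401:ℝ)/4000) ^ (t:ℝ) := by
    rw [h4, h5, ← Real.mul_rpow (by norm_num) (by norm_num)]
    norm_num
  rw [halg] at step4
  refine step4.trans ?_
  have hexp : Real.exp (-t/2) = (Real.exp (-1/2 : ℝ)) ^ (t:ℝ) := by
    rw [← Real.exp_mul]; ring_nf
  rw [hexp]
  refine Real.rpow_le_rpow (by norm_num) ?_ ht
  have h1 : Real.exp (-1/2 : ℝ) = (Real.exp (1/2 : ℝ))⁻¹ := by
    rw [← Real.exp_neg]; norm_num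
  rw [h1, le_inv_comm₀ (by norm_num) (Real.exp_pos _)]
  have h2 : Real.exp (1/2 : ℝ) * Real.exp (1/2 : ℝ) = Real.exp 1 := by
    rw [← Real.exp_add]; norm_num
  nlinarith [Real.exp_one_lt_d9, Real.exp_pos (1/2 : ℝ)]

theorem stmt6 (n : ℕ) (w : ℕ → ℝ)
    (hw : ∀ k, 0 ≤ w k)
    (hsupp : ∀ k, k ∉ Finset.Icc 1 (n + 1) → w k = 0)
    (hsum : ∑ k ∈ Finset.Icc 1 (n + 1), w k = 1)
    (ε : ℝ) (hε : 0 < ε) :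
    ∑ k ∈ Finset.Icc 1 (n + 1), w k * binCdfLT k (ε * n) ≤
      (∑ k ∈ (Finset.Icc 1 (n + 1)).filter (fun k : ℕ => (k : ℝ) < 4 * ε * n), w k) +
        Real.exp (-(ε * n) / 2) := by
  classical
  set S := Finset.Icc 1 (n + 1) with hS
  set P : ℕ → Prop := fun k : ℕ => (k : ℝ) < 4 * ε * n with hP
  rw [← Finset.sum_filter_add_sum_filter_not S P]
  refine add_le_add ?_ ?_
  · calc ∑ k ∈ S.filter P, w k * binCdfLT k (ε * n)
        ≤ ∑ k ∈ S.filter P, w k * 1 :=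
          Finset.sum_le_sum fun k _ =>
            mul_le_mul_of_nonneg_left (binCdfLT_le_one _ _) (hw k)
      _ = ∑ k ∈ S.filter P, w k := by simp
  · calc ∑ k ∈ S.filter (fun k => ¬ P k), w k * binCdfLT k (ε * n)
        ≤ ∑ k ∈ S.filter (fun k => ¬ P k), w k * Real.exp (-(ε * n) / 2) := by
          refine Finset.sum_le_sum ?_
          intro k hk
          have hnp : ¬ P k := (Finset.mem_filter.1 hk).2
          have h4 : 4 * (ε * n) ≤ (k:ℝ) := by
            simp only [hP, not_lt] at hnp
            linarith
          exact mul_le_mul_of_nonneg_left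
            (chernoff k (ε * n) (by positivity) h4) (hw k)
      _ = (∑ k ∈ S.filter (fun k => ¬ P k), w k) * Real.exp (-(ε * n) / 2) := by
          rw [Finset.sum_mul]
      _ ≤ 1 * Real.exp (-(ε * n) / 2) := by
          refine mul_le_mul_of_nonneg_right ?_ (Real.exp_nonneg _)
          rw [← hsum]
          exact Finset.sum_le_sum_of_subset_of_nonneg (Finset.filter_subset _ _)
            (fun k _ _ => hw k)
      _ = Real.exp (-(ε * n) / 2) := one_mul _
end

section
/- Let G be a countable group acting on a set X, let x ∈ X, let ν be a probability measure on G, and let ε > 0. For a sequence h ∈ G^k let O_h(x) denote the inverted orbit of x under h, and let ν^{⊗k} denote the product measure on G^k. Then for all n, m ≥ 1, ν^{⊗(n+m)}({h ∈ G^{n+m} : |O_h(x)| ≤ ε(n+m)}) ≥ ν^{⊗n}({h ∈ G^n : |O_h(x)| ≤ εn}) · ν^{⊗m}({h ∈ G^m : |O_h(x)| ≤ εm}). In other words, the sequence a_n = P(|O_n(x)| ≤ εn) of inverted-orbit anticoncentration probabilities for i.i.d. ν-distributed increments is supermultiplicative. -/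
open MeasureTheory Pointwise

/-- The inverted orbit of a point `x` under a finite sequence `h = [h₁, …, hₙ]` of group
elements: `O_h(x) = {x, hₙ•x, (hₙhₙ₋₁)•x, …, (hₙhₙ₋₁⋯h₁)•x}`. -/
def invOrbit {G X : Type*} [Group G] [MulAction G X] (h : List G) (x : X) : Set X :=
  insert x {y : X | ∃ k < h.length, y = (h.drop k).reverse.prod • x}

lemma invOrbit_finite {G X : Type*} [Group G] [MulAction G X] (h : List G) (x : X) :
    (invOrbit h x).Finite := by
  have : {y : X | ∃ k < h.length, y = (h.drop k).reverse.prod • x} ⊆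
      (fun k => (h.drop k).reverse.prod • x) '' Set.Iio h.length := by
    rintro y ⟨k, hk, rfl⟩
    exact ⟨k, hk, rfl⟩
  exact (((Set.finite_Iio _).image _).subset this).insert x

lemma invOrbit_append_subset {G X : Type*} [Group G] [MulAction G X] (a b : List G) (x : X) :
    invOrbit (a ++ b) x ⊆ (b.reverse.prod • invOrbit a x) ∪ invOrbit b x := by
  rintro y (rfl | ⟨k, hk, rfl⟩)
  · exact Or.inr (Set.mem_insert _ _)
  · rcases lt_or_ge k a.length with hka | hka
    · left
      rw [List.drop_append_of_le_length hka.le, List.reverse_append, List.prod_append,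
        mul_smul]
      exact ⟨(a.drop k).reverse.prod • x, Or.inr ⟨k, hka, rfl⟩, rfl⟩
    · right
      obtain ⟨i, rfl⟩ := Nat.exists_eq_add_of_le hka
      rw [List.drop_append]
      rw [List.length_append] at hk
      exact Or.inr ⟨i, by omega, by simp [List.drop_eq_nil_of_le (Nat.le_add_right a.length i)]⟩

lemma ncard_invOrbit_append_le {G X : Type*} [Group G] [MulAction G X] (a b : List G) (x : X) :
    (invOrbit (a ++ b) x).ncard ≤ (invOrbit a x).ncard + (invOrbit b x).ncard := by
  have h1 : (invOrbit (a ++ b) x).ncard ≤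
      ((b.reverse.prod • invOrbit a x) ∪ invOrbit b x).ncard := by
    exact Set.ncard_le_ncard (invOrbit_append_subset a b x)
      (((invOrbit_finite a x).smul_set).union (invOrbit_finite b x))
  have h2 : (b.reverse.prod • invOrbit a x).ncard = (invOrbit a x).ncard := by
    rw [← Set.image_smul]
    exact Set.ncard_image_of_injective _ (MulAction.injective _)
  calc (invOrbit (a ++ b) x).ncard ≤ _ := h1
    _ ≤ (b.reverse.prod • invOrbit a x).ncard + (invOrbit b x).ncard := Set.ncard_union_le _ _
    _ = _ := by rw [h2]

theorem stmt9 {G X : Type*} [Group G] [Countable G] [MeasurableSpace G]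
    [MeasurableSingletonClass G] [MulAction G X] (x : X)
    (ν : Measure G) [IsProbabilityMeasure ν]
    (ε : ℝ) (hε : 0 < ε) (n m : ℕ) (hn : 1 ≤ n) (hm : 1 ≤ m) :
    (Measure.pi fun _ : Fin n => ν)
        {h : Fin n → G | ((invOrbit (List.ofFn h) x).ncard : ℝ) ≤ ε * n} *
      (Measure.pi fun _ : Fin m => ν)
        {h : Fin m → G | ((invOrbit (List.ofFn h) x).ncard : ℝ) ≤ ε * m} ≤
    (Measure.pi fun _ : Fin (n + m) => ν)
        {h : Fin (n + m) → G | ((invOrbit (List.ofFn h) x).ncard : ℝ) ≤ ε * (n + m)} := by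
  set A := {h : Fin n → G | ((invOrbit (List.ofFn h) x).ncard : ℝ) ≤ ε * n}
  set B := {h : Fin m → G | ((invOrbit (List.ofFn h) x).ncard : ℝ) ≤ ε * m}
  set S := {h : Fin (n + m) → G | ((invOrbit (List.ofFn h) x).ncard : ℝ) ≤ ε * (n + m)}
  -- the measure preserving identification
  have T1 := measurePreserving_sumPiEquivProdPi_symm
    (X := fun _ : Fin n ⊕ Fin m => G) (fun _ => ν)
  have T2 := measurePreserving_piCongrLeft (fun _ : Fin (n + m) => ν) finSumFinEquiv
  have T := T2.comp T1
  have hTfun : ∀ p : (Fin n → G) × (Fin m → G),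
      (MeasurableEquiv.piCongrLeft (fun _ : Fin (n+m) => G) finSumFinEquiv)
        ((MeasurableEquiv.sumPiEquivProdPi (fun _ : Fin n ⊕ Fin m => G)).symm p)
        = Fin.append p.1 p.2 := by
    intro p
    funext i
    simp only [MeasurableEquiv.coe_piCongrLeft, MeasurableEquiv.coe_sumPiEquivProdPi_symm]
    induction i using Fin.addCases with
    | left j =>
      rw [Fin.append_left, ← finSumFinEquiv_apply_left]
      simp [-finSumFinEquiv_apply_left, MeasurableEquiv.coe_piCongrLeft, MeasurableEquiv.coe_sumPiEquivProdPi_symm,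
        Equiv.piCongrLeft_apply_apply, Equiv.sumPiEquivProdPi_symm_apply]
    | right j =>
      rw [Fin.append_right, ← finSumFinEquiv_apply_right]
      simp [-finSumFinEquiv_apply_right, MeasurableEquiv.coe_piCongrLeft, MeasurableEquiv.coe_sumPiEquivProdPi_symm,
        Equiv.piCongrLeft_apply_apply, Equiv.sumPiEquivProdPi_symm_apply]
  -- subsets are measurable since the spaces are countable
  have hmeasS : MeasurableSet S := (Set.to_countable S).measurableSet
  -- key inclusion
  have hsub : A ×ˢ B ⊆ (fun p : (Fin n → G) × (Fin m → G) => Fin.append p.1 p.2) ⁻¹' S := by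
    rintro ⟨a, b⟩ ⟨ha, hb⟩
    simp only [Set.mem_preimage, S, Set.mem_setOf_eq, List.ofFn_fin_append]
    calc ((invOrbit (List.ofFn a ++ List.ofFn b) x).ncard : ℝ)
        ≤ ((invOrbit (List.ofFn a) x).ncard : ℝ) + ((invOrbit (List.ofFn b) x).ncard : ℝ) := by
          exact_mod_cast ncard_invOrbit_append_le (List.ofFn a) (List.ofFn b) x
      _ ≤ ε * n + ε * m := add_le_add ha hb
      _ = ε * (↑n + ↑m) := by ring
  calc (Measure.pi fun _ : Fin n => ν) A * (Measure.pi fun _ : Fin m => ν) B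
      = ((Measure.pi fun _ : Fin n => ν).prod (Measure.pi fun _ : Fin m => ν)) (A ×ˢ B) :=
        (Measure.prod_prod A B).symm
    _ ≤ ((Measure.pi fun _ : Fin n => ν).prod (Measure.pi fun _ : Fin m => ν))
        ((fun p : (Fin n → G) × (Fin m → G) => Fin.append p.1 p.2) ⁻¹' S) :=
        measure_mono hsub
    _ = (Measure.pi fun _ : Fin (n + m) => ν) S := by
        have := T.measure_preimage (μa := (Measure.pi fun _ : Fin n => ν).prod
          (Measure.pi fun _ : Fin m => ν)) (s := S) hmeasS.nullMeasurableSet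
        rw [← this]
        congr 1
        ext p
        simp only [Set.mem_preimage, Function.comp_apply, hTfun]
end
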